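/- arXiv:2510.04606 — 2 statements merged into one kernel-verified Lean document; each statement's English description precedes it below -/
import Mathlib

section
/- (Envelope theorem for the closed-form last layer, Theorem 1.) Let o, d, n, N be positive integers, β > 0, Y ∈ ℝ^{o×n}, and let Φ : ℝ^N → ℝ^{d×n} be differentiable at a point θ₀ ∈ ℝ^N. Define L(W, θ) = ‖Y − WΦ(θ)‖_F² + β‖W‖_F², the closed-form minimizer W*(θ) = YΦ(θ)ᵀ(Φ(θ)Φ(θ)ᵀ + βI)⁻¹, and L*(θ) = L(W*(θ), θ). Then L* is differentiable at θ₀ and its (Fréchet) derivative at θ₀ equals the derivative at θ₀ of the map θ ↦ L(W*(θ₀), θ) in which the last layer is held fixed at W*(θ₀); in particular ∇L*(θ₀) = ∇_θ L(W*(θ₀), θ₀). -/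
open Matrix BigOperators

attribute [local instance] Matrix.frobeniusNormedAddCommGroup Matrix.frobeniusNormedSpace

/-- Squared Frobenius norm of a real matrix. -/
noncomputable def sqFrob {m n : ℕ} (A : Matrix (Fin m) (Fin n) ℝ) : ℝ :=
  ∑ i, ∑ j, (A i j) ^ 2

/-- The ridge loss `L(W, θ) = ‖Y − WΦ(θ)‖_F² + β‖W‖_F²`. -/
noncomputable def ridgeLossTheta {o d n N : ℕ} (β : ℝ) (Y : Matrix (Fin o) (Fin n) ℝ)
    (Φ : (Fin N → ℝ) → Matrix (Fin d) (Fin n) ℝ)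
    (W : Matrix (Fin o) (Fin d) ℝ) (θ : Fin N → ℝ) : ℝ :=
  sqFrob (Y - W * Φ θ) + β * sqFrob W

/-- The closed-form last layer `W*(θ) = YΦ(θ)ᵀ(Φ(θ)Φ(θ)ᵀ + βI)⁻¹`. -/
noncomputable def ridgeWstarTheta {o d n N : ℕ} (β : ℝ) (Y : Matrix (Fin o) (Fin n) ℝ)
    (Φ : (Fin N → ℝ) → Matrix (Fin d) (Fin n) ℝ) (θ : Fin N → ℝ) :
    Matrix (Fin o) (Fin d) ℝ :=
  Y * (Φ θ)ᵀ * (Φ θ * (Φ θ)ᵀ + β • (1 : Matrix (Fin d) (Fin d) ℝ))⁻¹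

/-!
For fixed `θ₀`, the closed-form layer `W₀ = W*(θ₀)` solves the normal equations
`W₀ (ΦΦᵀ + βI) = YΦᵀ`, so the cross term in the expansion of `L(W₀ + D, θ₀)` cancels and
`L(W₀ + D, θ₀) = L(W₀, θ₀) + ‖DΦ‖² + β‖D‖²`. Thus `W₀` minimises `L(·, θ₀)`, the partial derivative
of `L` in `W` vanishes there, and the chain rule for `θ ↦ L(W*(θ), θ)` leaves only the partial
derivative in `θ`. `W*` is differentiable because matrix inversion is differentiable at the
positive definite matrix `ΦΦᵀ + βI`.
-/

section MatrixCalculus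

variable {E : Type*} [NormedAddCommGroup E] [NormedSpace ℝ E] {l m n : Type*}
  [Fintype l] [Fintype m] [Fintype n] {x : E}

theorem differentiableAt_matrix_iff {f : E → Matrix m n ℝ} :
    DifferentiableAt ℝ f x ↔ ∀ i j, DifferentiableAt ℝ (fun y => f y i j) x := by
  let e : Matrix m n ℝ ≃L[ℝ] (m → n → ℝ) :=
    (Matrix.ofLinearEquiv ℝ).symm.toContinuousLinearEquiv
  refine e.comp_differentiableAt_iff.symm.trans ?_
  refine differentiableAt_pi.trans (forall_congr' fun i => ?_)
  exact differentiableAt_pi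

@[fun_prop]
theorem DifferentiableAt.matrix_mul {f : E → Matrix l m ℝ} {g : E → Matrix m n ℝ}
    (hf : DifferentiableAt ℝ f x) (hg : DifferentiableAt ℝ g x) :
    DifferentiableAt ℝ (fun y => f y * g y) x := by
  rw [differentiableAt_matrix_iff] at *
  intro i j
  simp only [Matrix.mul_apply]
  fun_prop

@[fun_prop]
theorem DifferentiableAt.matrix_transpose {f : E → Matrix m n ℝ} (hf : DifferentiableAt ℝ f x) :
    DifferentiableAt ℝ (fun y => (f y)ᵀ) x := by
  rw [differentiableAt_matrix_iff] at *
  exact fun i j => hf j i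

attribute [local instance] Matrix.frobeniusNormedRing Matrix.frobeniusNormedAlgebra in
@[fun_prop]
theorem DifferentiableAt.matrix_inv [DecidableEq n] {f : E → Matrix n n ℝ}
    (hf : DifferentiableAt ℝ f x) (hdet : IsUnit (f x).det) :
    DifferentiableAt ℝ (fun y => (f y)⁻¹) x := by
  simp only [Matrix.nonsing_inv_eq_ringInverse]
  exact hf.inverse ((Matrix.isUnit_iff_isUnit_det _).mpr hdet)

@[fun_prop]
theorem DifferentiableAt.sqFrob {k r : ℕ} {f : E → Matrix (Fin k) (Fin r) ℝ}
    (hf : DifferentiableAt ℝ f x) : DifferentiableAt ℝ (fun y => sqFrob (f y)) x := by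
  rw [differentiableAt_matrix_iff] at hf
  unfold _root_.sqFrob
  fun_prop

end MatrixCalculus

section Envelope

variable {E F : Type*} [NormedAddCommGroup E] [NormedSpace ℝ E] [NormedAddCommGroup F]
  [NormedSpace ℝ F]

open ContinuousLinearMap in
theorem envelope_fderiv {f : E → F → ℝ} {w : F → E} {x₀ : F}
    (hf : DifferentiableAt ℝ (fun p : E × F => f p.1 p.2) (w x₀, x₀))
    (hw : DifferentiableAt ℝ w x₀) (hmin : IsLocalMin (fun e => f e x₀) (w x₀)) :
    DifferentiableAt ℝ (fun x => f (w x) x) x₀ ∧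
      fderiv ℝ (fun x => f (w x) x) x₀ = fderiv ℝ (fun x => f (w x₀) x) x₀ := by
  obtain ⟨L, hL⟩ := hf
  have hpath :
      HasFDerivAt (fun x => f (w x) x) (L.comp ((fderiv ℝ w x₀).prod (.id ℝ F))) x₀ :=
    hL.comp (f := fun x => (w x, x)) x₀ (hw.hasFDerivAt.prodMk (hasFDerivAt_id x₀))
  have hfixed : HasFDerivAt (fun x => f (w x₀) x) (L.comp (inr ℝ E F)) x₀ :=
    hL.comp (f := fun x => (w x₀, x)) x₀ (hasFDerivAt_prodMk_right (w x₀) x₀)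
  have hpartial : L.comp (inl ℝ E F) = 0 :=
    (hL.comp (f := fun e => (e, x₀)) (w x₀) (hasFDerivAt_prodMk_left (w x₀) x₀)).fderiv ▸
      hmin.fderiv_eq_zero
  have hsplit :
      (fderiv ℝ w x₀).prod (.id ℝ F) = (inl ℝ E F).comp (fderiv ℝ w x₀) + inr ℝ E F := by
    ext x <;> simp
  refine ⟨hpath.differentiableAt, ?_⟩
  rw [hpath.fderiv, hfixed.fderiv, hsplit, comp_add, ← comp_assoc, hpartial, zero_comp, zero_add]

end Envelope

section SqFrob

variable {m n : ℕ}

theorem sqFrob_eq_trace (A : Matrix (Fin m) (Fin n) ℝ) : sqFrob A = trace (A * Aᵀ) := by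
  simp [sqFrob, trace, mul_apply, sq]

theorem sqFrob_nonneg (A : Matrix (Fin m) (Fin n) ℝ) : 0 ≤ sqFrob A := by
  unfold sqFrob
  positivity

theorem trace_mul_transpose_comm (A B : Matrix (Fin m) (Fin n) ℝ) :
    trace (B * Aᵀ) = trace (A * Bᵀ) := by
  rw [← trace_transpose, transpose_mul, transpose_transpose]

theorem sqFrob_add (A B : Matrix (Fin m) (Fin n) ℝ) :
    sqFrob (A + B) = sqFrob A + 2 * trace (A * Bᵀ) + sqFrob B := by
  simp only [sqFrob_eq_trace, transpose_add, Matrix.add_mul, Matrix.mul_add, trace_add,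
    trace_mul_transpose_comm A B]
  ring

theorem sqFrob_sub (A B : Matrix (Fin m) (Fin n) ℝ) :
    sqFrob (A - B) = sqFrob A - 2 * trace (A * Bᵀ) + sqFrob B := by
  simp only [sqFrob_eq_trace, transpose_sub, Matrix.sub_mul, Matrix.mul_sub, trace_sub,
    trace_mul_transpose_comm A B]
  ring

end SqFrob

theorem isUnit_det_mul_transpose_add_smul_one {d n : Type*} [Fintype d] [Fintype n]
    [DecidableEq d] (Φ₀ : Matrix d n ℝ) {β : ℝ} (hβ : 0 < β) :
    IsUnit (Φ₀ * Φ₀ᵀ + β • (1 : Matrix d d ℝ)).det := by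
  have hgram : (Φ₀ * Φ₀ᵀ).PosSemidef := by
    simpa only [conjTranspose_eq_transpose_of_trivial] using posSemidef_self_mul_conjTranspose Φ₀
  have hridge : (β • (1 : Matrix d d ℝ)).PosDef := by
    simpa only [smul_one_eq_diagonal] using PosDef.diagonal fun _ => hβ
  exact (isUnit_iff_isUnit_det _).mp (PosDef.posSemidef_add hgram hridge).isUnit

section Ridge

variable {o d n N : ℕ} (β : ℝ) (Y : Matrix (Fin o) (Fin n) ℝ)
  (Φ : (Fin N → ℝ) → Matrix (Fin d) (Fin n) ℝ)

theorem ridgeWstarTheta_mul (hβ : 0 < β) (θ : Fin N → ℝ) :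
    ridgeWstarTheta β Y Φ θ * (Φ θ * (Φ θ)ᵀ + β • 1) = Y * (Φ θ)ᵀ :=
  nonsing_inv_mul_cancel_right _ _ (isUnit_det_mul_transpose_add_smul_one (Φ θ) hβ)

theorem ridgeLossTheta_add_of_mul_eq {W₀ : Matrix (Fin o) (Fin d) ℝ} {θ : Fin N → ℝ}
    (hW₀ : W₀ * (Φ θ * (Φ θ)ᵀ + β • 1) = Y * (Φ θ)ᵀ) (D : Matrix (Fin o) (Fin d) ℝ) :
    ridgeLossTheta β Y Φ (W₀ + D) θ =
      ridgeLossTheta β Y Φ W₀ θ + (sqFrob (D * Φ θ) + β * sqFrob D) := by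
  have hresidual : (Y - W₀ * Φ θ) * (Φ θ)ᵀ = β • W₀ := by
    rw [Matrix.sub_mul, ← hW₀, Matrix.mul_assoc, Matrix.mul_add, Matrix.mul_smul, Matrix.mul_one]
    abel
  have hcross : trace ((Y - W₀ * Φ θ) * (D * Φ θ)ᵀ) = β * trace (W₀ * Dᵀ) := by
    rw [transpose_mul, ← Matrix.mul_assoc, hresidual, smul_mul, trace_smul, smul_eq_mul]
  simp only [ridgeLossTheta, Matrix.add_mul, ← sub_sub, sqFrob_sub, sqFrob_add, hcross]
  ring

theorem ridgeLossTheta_ridgeWstarTheta_le (hβ : 0 < β) (θ : Fin N → ℝ)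
    (W : Matrix (Fin o) (Fin d) ℝ) :
    ridgeLossTheta β Y Φ (ridgeWstarTheta β Y Φ θ) θ ≤ ridgeLossTheta β Y Φ W θ := by
  have hexpand := ridgeLossTheta_add_of_mul_eq β Y Φ (ridgeWstarTheta_mul β Y Φ hβ θ)
    (W - ridgeWstarTheta β Y Φ θ)
  rw [add_sub_cancel] at hexpand
  rw [hexpand, le_add_iff_nonneg_right]
  exact add_nonneg (sqFrob_nonneg _) (mul_nonneg hβ.le (sqFrob_nonneg _))

variable {Φ} {θ₀ : Fin N → ℝ}

theorem differentiableAt_ridgeLossTheta (hΦ : DifferentiableAt ℝ Φ θ₀)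
    (W : Matrix (Fin o) (Fin d) ℝ) :
    DifferentiableAt ℝ (fun p : Matrix (Fin o) (Fin d) ℝ × (Fin N → ℝ) =>
      ridgeLossTheta β Y Φ p.1 p.2) (W, θ₀) := by
  unfold ridgeLossTheta
  fun_prop

theorem differentiableAt_ridgeWstarTheta (hβ : 0 < β) (hΦ : DifferentiableAt ℝ Φ θ₀) :
    DifferentiableAt ℝ (ridgeWstarTheta β Y Φ) θ₀ := by
  unfold ridgeWstarTheta
  fun_prop (disch := exact isUnit_det_mul_transpose_add_smul_one (Φ θ₀) hβ)

end Ridge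

theorem stmt_1_general (o d n N : ℕ)
    (β : ℝ) (hβ : 0 < β)
    (Y : Matrix (Fin o) (Fin n) ℝ)
    (Φ : (Fin N → ℝ) → Matrix (Fin d) (Fin n) ℝ) (θ₀ : Fin N → ℝ)
    (hΦ : DifferentiableAt ℝ Φ θ₀) :
    DifferentiableAt ℝ
      (fun θ => ridgeLossTheta β Y Φ (ridgeWstarTheta β Y Φ θ) θ) θ₀ ∧
    fderiv ℝ (fun θ => ridgeLossTheta β Y Φ (ridgeWstarTheta β Y Φ θ) θ) θ₀ =
      fderiv ℝ (fun θ => ridgeLossTheta β Y Φ (ridgeWstarTheta β Y Φ θ₀) θ) θ₀ :=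
  envelope_fderiv (differentiableAt_ridgeLossTheta β Y hΦ _)
    (differentiableAt_ridgeWstarTheta β Y hβ hΦ)
    (.of_forall (ridgeLossTheta_ridgeWstarTheta_le β Y Φ hβ θ₀))

theorem stmt_1 (o d n N : ℕ) (ho : 0 < o) (hd : 0 < d) (hn : 0 < n) (hN : 0 < N)
    (β : ℝ) (hβ : 0 < β)
    (Y : Matrix (Fin o) (Fin n) ℝ)
    (Φ : (Fin N → ℝ) → Matrix (Fin d) (Fin n) ℝ) (θ₀ : Fin N → ℝ)
    (hΦ : DifferentiableAt ℝ Φ θ₀) :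
    DifferentiableAt ℝ
      (fun θ => ridgeLossTheta β Y Φ (ridgeWstarTheta β Y Φ θ) θ) θ₀ ∧
    fderiv ℝ (fun θ => ridgeLossTheta β Y Φ (ridgeWstarTheta β Y Φ θ) θ) θ₀ =
      fderiv ℝ (fun θ => ridgeLossTheta β Y Φ (ridgeWstarTheta β Y Φ θ₀) θ) θ₀ :=
  stmt_1_general o d n N β hβ Y Φ θ₀ hΦ
end

section
/- (Theorem 3, critical-point part.) Let o, d, n be positive integers, β > 0, and Y ∈ ℝ^{o×n} with Y ≠ 0. Then the reduced loss L* : ℝ^{d×n} → ℝ admits a critical point that is not a global minimizer: there exists Φ⋆ ∈ ℝ^{d×n} (e.g. Φ⋆ = 0) such that DL*(Φ⋆) = 0 while there exists Φ ∈ ℝ^{d×n} with L*(Φ) < L*(Φ⋆). -/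
/-! `W*(Φ)` solves the normal equation `W (ΦΦᵀ + βI) = YΦᵀ`, so the ridge objective
`R(W) = ‖Y - WΦ‖² + β‖W‖²` satisfies the Pythagorean identity
`R(W* + V) = R(W*) + ‖VΦ‖² + β‖V‖²`. Taking `V = -W*` gives
`L*(Φ) = ‖Y‖² - ‖W*Φ‖² - β‖W*‖² ≤ ‖Y‖² = L*(0)`, with strict inequality as soon as `YΦᵀ ≠ 0`.
In the other direction, every `W` has `R(W) ≥ ‖Y‖² - 2‖Y‖‖W‖‖Φ‖ + β‖W‖² ≥ ‖Y‖² - ‖Y‖²‖Φ‖²/β`.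
Hence `L*(Φ) - L*(0) = O(‖Φ‖²)`: the origin is a critical point of `L*`, and it is a global
maximum rather than a minimum. -/

open Matrix BigOperators

attribute [local instance] Matrix.frobeniusNormedAddCommGroup Matrix.frobeniusNormedSpace

/-- The closed-form ridge solution `W*(Φ) = YΦᵀ(ΦΦᵀ + βI)⁻¹`. -/
noncomputable def Wstar {o d n : ℕ} (β : ℝ) (Y : Matrix (Fin o) (Fin n) ℝ)
    (Φ : Matrix (Fin d) (Fin n) ℝ) : Matrix (Fin o) (Fin d) ℝ :=
  Y * Φᵀ * (Φ * Φᵀ + β • (1 : Matrix (Fin d) (Fin d) ℝ))⁻¹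

/-- The reduced loss `L*(Φ) = ‖Y − W*(Φ)Φ‖_F² + β‖W*(Φ)‖_F²`. -/
noncomputable def Lstar {o d n : ℕ} (β : ℝ) (Y : Matrix (Fin o) (Fin n) ℝ)
    (Φ : Matrix (Fin d) (Fin n) ℝ) : ℝ :=
  sqFrob (Y - Wstar β Y Φ * Φ) + β * sqFrob (Wstar β Y Φ)

open Asymptotics in
theorem hasFDerivAt_zero_of_abs_sub_le_sq {E : Type*} [NormedAddCommGroup E] [NormedSpace ℝ E]
    {f : E → ℝ} {x₀ : E} (C : ℝ) (hf : ∀ x, |f x - f x₀| ≤ C * ‖x - x₀‖ ^ 2) :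
    HasFDerivAt f (0 : E →L[ℝ] ℝ) x₀ := by
  rw [hasFDerivAt_iff_isLittleO_nhds_zero]
  refine IsBigO.trans_isLittleO (g := fun h : E => ‖h‖ ^ 2) ?_ (isLittleO_norm_pow_id one_lt_two)
  refine IsBigO.of_bound C (Filter.Eventually.of_forall fun h => ?_)
  simpa using hf (x₀ + h)

section Frobenius

variable {m n : ℕ}

theorem sqFrob_eq_norm_sq (A : Matrix (Fin m) (Fin n) ℝ) : sqFrob A = ‖A‖ ^ 2 := by
  rw [frobenius_norm_def, ← Real.sqrt_eq_rpow, Real.sq_sqrt (by positivity), sqFrob]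
  simp

theorem sqFrob_pos {A : Matrix (Fin m) (Fin n) ℝ} (hA : A ≠ 0) : 0 < sqFrob A := by
  rw [sqFrob_eq_norm_sq]; positivity

theorem sqFrob_neg (A : Matrix (Fin m) (Fin n) ℝ) : sqFrob (-A) = sqFrob A := by
  simp [sqFrob]

end Frobenius

noncomputable def ridgeLoss {o d n : ℕ} (β : ℝ) (Y : Matrix (Fin o) (Fin n) ℝ)
    (Φ : Matrix (Fin d) (Fin n) ℝ) (W : Matrix (Fin o) (Fin d) ℝ) : ℝ :=
  sqFrob (Y - W * Φ) + β * sqFrob W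

section Ridge

variable {o d n : ℕ} {β : ℝ} (Y : Matrix (Fin o) (Fin n) ℝ) (Φ : Matrix (Fin d) (Fin n) ℝ)

theorem ridgeLoss_add_of_mul_gram_eq {W₀ : Matrix (Fin o) (Fin d) ℝ}
    (hW₀ : W₀ * (Φ * Φᵀ + β • 1) = Y * Φᵀ) (V : Matrix (Fin o) (Fin d) ℝ) :
    ridgeLoss β Y Φ (W₀ + V) = ridgeLoss β Y Φ W₀ + sqFrob (V * Φ) + β * sqFrob V := by
  have hres : (Y - W₀ * Φ) * Φᵀ = β • W₀ := by
    rw [Matrix.sub_mul, ← hW₀, Matrix.mul_add, Matrix.mul_smul, Matrix.mul_one, Matrix.mul_assoc]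
    abel
  have hcross : trace ((Y - W₀ * Φ) * (-(V * Φ))ᵀ) = -(β * trace (W₀ * Vᵀ)) := by
    rw [transpose_neg, transpose_mul, Matrix.mul_neg, ← Matrix.mul_assoc, hres, trace_neg,
      Matrix.smul_mul, trace_smul, smul_eq_mul]
  have hsplit : Y - (W₀ + V) * Φ = (Y - W₀ * Φ) + -(V * Φ) := by
    rw [Matrix.add_mul]; abel
  rw [ridgeLoss, ridgeLoss, hsplit, sqFrob_add, sqFrob_add, sqFrob_neg, hcross]
  ring

theorem Lstar_eq_ridgeLoss : Lstar β Y Φ = ridgeLoss β Y Φ (Wstar β Y Φ) := rfl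

theorem ridgeLoss_zero : ridgeLoss β Y Φ 0 = sqFrob Y := by
  simp [ridgeLoss, sqFrob]

theorem isUnit_gram_add_smul_one (hβ : 0 < β) :
    IsUnit (Φ * Φᵀ + β • (1 : Matrix (Fin d) (Fin d) ℝ)) := by
  have h := PosDef.posSemidef_add (posSemidef_self_mul_conjTranspose Φ) (PosDef.one.smul hβ)
  rw [conjTranspose_eq_transpose_of_trivial] at h
  exact h.isUnit

theorem Wstar_mul_gram (hβ : 0 < β) : Wstar β Y Φ * (Φ * Φᵀ + β • 1) = Y * Φᵀ := by
  rw [Wstar, Matrix.mul_assoc, nonsing_inv_mul _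
    ((isUnit_iff_isUnit_det _).mp (isUnit_gram_add_smul_one Φ hβ)), Matrix.mul_one]

theorem Lstar_add_sqFrob_Wstar (hβ : 0 < β) :
    Lstar β Y Φ + sqFrob (Wstar β Y Φ * Φ) + β * sqFrob (Wstar β Y Φ) = sqFrob Y := by
  have h := ridgeLoss_add_of_mul_gram_eq Y Φ (Wstar_mul_gram Y Φ hβ) (-Wstar β Y Φ)
  rw [add_neg_cancel, ridgeLoss_zero, Matrix.neg_mul, sqFrob_neg, sqFrob_neg] at h
  rw [Lstar_eq_ridgeLoss, h]

theorem Lstar_le_sqFrob (hβ : 0 < β) : Lstar β Y Φ ≤ sqFrob Y := by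
  have := Lstar_add_sqFrob_Wstar Y Φ hβ
  nlinarith [sqFrob_nonneg (Wstar β Y Φ * Φ), sqFrob_nonneg (Wstar β Y Φ)]

theorem Lstar_lt_sqFrob (hβ : 0 < β) (hYΦ : Y * Φᵀ ≠ 0) : Lstar β Y Φ < sqFrob Y := by
  have hW : Wstar β Y Φ ≠ 0 := fun h => hYΦ (by rw [← Wstar_mul_gram Y Φ hβ, h, Matrix.zero_mul])
  have := Lstar_add_sqFrob_Wstar Y Φ hβ
  nlinarith [sqFrob_nonneg (Wstar β Y Φ * Φ), sqFrob_pos hW]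

theorem sqFrob_sub_le_ridgeLoss (hβ : 0 < β) (W : Matrix (Fin o) (Fin d) ℝ) :
    sqFrob Y - sqFrob Y / β * ‖Φ‖ ^ 2 ≤ ridgeLoss β Y Φ W := by
  have hfit : (‖Y‖ - ‖W * Φ‖) ^ 2 ≤ ‖Y - W * Φ‖ ^ 2 :=
    sq_le_sq.mpr ((abs_norm_sub_norm_le Y (W * Φ)).trans (le_abs_self _))
  have hmul : ‖Y‖ * ‖W * Φ‖ ≤ ‖Y‖ * (‖W‖ * ‖Φ‖) :=
    mul_le_mul_of_nonneg_left (frobenius_norm_mul W Φ) (norm_nonneg Y)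
  have hsq : 0 ≤ (β * ‖W‖ - ‖Y‖ * ‖Φ‖) ^ 2 / β := by positivity
  have hexp : (β * ‖W‖ - ‖Y‖ * ‖Φ‖) ^ 2 / β
      = β * ‖W‖ ^ 2 - 2 * (‖Y‖ * (‖W‖ * ‖Φ‖)) + ‖Y‖ ^ 2 / β * ‖Φ‖ ^ 2 := by
    field_simp; ring
  rw [ridgeLoss, sqFrob_eq_norm_sq, sqFrob_eq_norm_sq, sqFrob_eq_norm_sq]
  nlinarith [sq_nonneg ‖W * Φ‖]

theorem Lstar_zero : Lstar β Y (0 : Matrix (Fin d) (Fin n) ℝ) = sqFrob Y := by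
  simp [Lstar, Wstar, sqFrob]

theorem abs_Lstar_sub_Lstar_zero_le (hβ : 0 < β) :
    |Lstar β Y Φ - Lstar β Y (0 : Matrix (Fin d) (Fin n) ℝ)| ≤ sqFrob Y / β * ‖Φ - 0‖ ^ 2 := by
  rw [Lstar_zero, sub_zero, abs_sub_comm, abs_of_nonneg (sub_nonneg.mpr (Lstar_le_sqFrob Y Φ hβ)),
    Lstar_eq_ridgeLoss]
  linarith [sqFrob_sub_le_ridgeLoss Y Φ hβ (Wstar β Y Φ)]

end Ridge

theorem stmt_10_general (o d n : ℕ) (hd : 0 < d)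
    (β : ℝ) (hβ : 0 < β)
    (Y : Matrix (Fin o) (Fin n) ℝ) (hY : Y ≠ 0) :
    ∃ Φstar : Matrix (Fin d) (Fin n) ℝ,
      DifferentiableAt ℝ (Lstar β Y) Φstar ∧
      fderiv ℝ (Lstar β Y) Φstar = 0 ∧
      ∃ Φ : Matrix (Fin d) (Fin n) ℝ, Lstar β Y Φ < Lstar β Y Φstar := by
  obtain ⟨i, j, hij⟩ : ∃ i j, Y i j ≠ 0 := by
    by_contra! h
    exact hY (Matrix.ext h)
  have hcrit : HasFDerivAt (Lstar β Y) 0 (0 : Matrix (Fin d) (Fin n) ℝ) :=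
    hasFDerivAt_zero_of_abs_sub_le_sq _ fun Φ => abs_Lstar_sub_Lstar_zero_le Y Φ hβ
  refine ⟨0, hcrit.differentiableAt, hcrit.fderiv, single ⟨0, hd⟩ j 1, ?_⟩
  rw [Lstar_zero]
  refine Lstar_lt_sqFrob Y _ hβ fun h => hij ?_
  simpa [transpose_single] using congrFun (congrFun h i) ⟨0, hd⟩

theorem stmt_10 (o d n : ℕ) (ho : 0 < o) (hd : 0 < d) (hn : 0 < n)
    (β : ℝ) (hβ : 0 < β)
    (Y : Matrix (Fin o) (Fin n) ℝ) (hY : Y ≠ 0) :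
    ∃ Φstar : Matrix (Fin d) (Fin n) ℝ,
      DifferentiableAt ℝ (Lstar β Y) Φstar ∧
      fderiv ℝ (Lstar β Y) Φstar = 0 ∧
      ∃ Φ : Matrix (Fin d) (Fin n) ℝ, Lstar β Y Φ < Lstar β Y Φstar :=
  stmt_10_general o d n hd β hβ Y hY
end
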